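/- arXiv:2307.07810 — 2 statements merged into one kernel-verified Lean document; each statement's English description precedes it below -/
import Mathlib

section
/- Let G be a graph on n vertices and let l ≥ 0. A real vector c indexed by functions I : Fin l → Fin n satisfies c (σ ∘ I) = c I for all σ ∈ Aut(G) and all I (i.e., c is a fixed vector of the permutation representation of Aut(G) on the l-th tensor power of ℝ^n) if and only if c lies in the ℝ-linear span of the set of G-homomorphism matrices X_𝐇^G of (0,l)-bilabelled graphs 𝐇 = (H, ∅, 𝐥), regarded as vectors indexed by (Fin l → Fin n). -/
/-!
Counting homomorphisms that must separate a pair `(a, b)` is inclusion–exclusion: all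
homomorphisms minus those with `φ a = φ b`, and the latter are the homomorphisms from the graph
with `a` and `b` glued. Recursing over all pairs, the number of injective homomorphisms with
prescribed labels lies in the span of homomorphism counts. For `H = G` an injective endomorphism
of a finite graph is an automorphism, so the injective count with labels `x` is the number of
`σ ∈ Aut(G)` with `σ ∘ x = I`, and averaging an invariant vector over `Aut(G)` expresses it
through these counts. Conversely, composing with `σ ∈ Aut(G)` permutes homomorphisms, so every
homomorphism count is invariant.
-/

open Function

universe u

variable {ι V V' W : Type*}

/-- For `P = IsGraphHom adjH adjG` this is the vector `X_𝐇^G` of `𝐇 = (H, ∅, lt)`. -/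
noncomputable def labelCount (P : (V → W) → Prop) (lt : ι → V) (I : ι → W) : ℝ :=
  Nat.card {φ : V → W // P φ ∧ φ ∘ lt = I}

def IsGraphHom (adjH : V → V → Prop) (adjG : W → W → Prop) (φ : V → W) : Prop :=
  ∀ u v, adjH u v → adjG (φ u) (φ v)

def Separates (L : List (V × V)) (φ : V → W) : Prop :=
  ∀ p ∈ L, φ p.1 ≠ φ p.2

def homVectors (adjG : W → W → Prop) : Set ((ι → W) → ℝ) :=
  {v | ∃ (m : ℕ) (adjH : Fin m → Fin m → Prop), (∀ u v, adjH u v → adjH v u) ∧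
    ∃ lt : ι → Fin m, v = labelCount (IsGraphHom adjH adjG) lt}

def autGroup (adjG : W → W → Prop) : Subgroup (Equiv.Perm W) where
  carrier := {σ | ∀ i j, adjG i j ↔ adjG (σ i) (σ j)}
  mul_mem' hσ hτ i j := (hτ i j).trans (hσ _ _)
  one_mem' _ _ := Iff.rfl
  inv_mem' {σ} hσ i j := by simpa using (hσ (σ⁻¹ i) (σ⁻¹ j)).symm

def autInvariants (adjG : W → W → Prop) : Submodule ℝ ((ι → W) → ℝ) where
  carrier := {c | ∀ σ ∈ autGroup adjG, ∀ I, c (σ ∘ I) = c I}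
  add_mem' hc hd σ hσ I := by simp only [Pi.add_apply, hc σ hσ I, hd σ hσ I]
  zero_mem' _ _ _ := rfl
  smul_mem' a c hc σ hσ I := by simp only [Pi.smul_apply, hc σ hσ I]

section labelCount

theorem labelCount_and_not [Finite V] [Finite W] (P Q : (V → W) → Prop) (lt : ι → V) :
    labelCount (fun φ => P φ ∧ ¬ Q φ) lt =
      labelCount P lt - labelCount (fun φ => P φ ∧ Q φ) lt := by
  classical
  have := Fintype.ofFinite V
  have := Fintype.ofFinite W
  funext I
  simp only [labelCount, Pi.sub_apply, Nat.card_eq_fintype_card, Fintype.card_subtype]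
  rw [eq_sub_iff_add_eq, add_comm, ← Nat.cast_add, ← Finset.card_filter_add_card_filter_not
    (s := Finset.univ.filter fun φ => P φ ∧ φ ∘ lt = I) (p := Q)]
  simp only [Finset.filter_filter]
  congr 3 <;> ext φ <;> simp only [Finset.mem_filter] <;> tauto

theorem labelCount_precomp {q : V → V'} (hq : Surjective q) (P : (V → W) → Prop)
    (lt : ι → V) :
    labelCount (fun ψ => P (ψ ∘ q)) (q ∘ lt) =
      labelCount (fun φ => P φ ∧ φ ∈ Set.range (· ∘ q)) lt := by
  funext I
  refine congrArg Nat.cast (Nat.card_congr (Equiv.ofBijective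
    (fun ψ => ⟨ψ.1 ∘ q, ⟨ψ.2.1, ψ.1, rfl⟩, ψ.2.2⟩) ⟨?_, ?_⟩))
  · exact fun ψ ψ' h => Subtype.ext (hq.injective_comp_right (congrArg Subtype.val h))
  · rintro ⟨_, ⟨hP, ψ, rfl⟩, hI⟩
    exact ⟨⟨ψ, hP, hI⟩, rfl⟩

theorem range_comp_quot_mk (a b : V) :
    Set.range (fun ψ : Quot (fun x y : V => x = a ∧ y = b) → W => ψ ∘ Quot.mk _) =
      {φ | φ a = φ b} := by
  ext φ
  constructor
  · rintro ⟨ψ, rfl⟩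
    exact congrArg ψ (Quot.sound ⟨rfl, rfl⟩)
  · intro h
    exact ⟨Quot.lift φ fun _ _ ⟨hx, hy⟩ => hx ▸ hy ▸ h, rfl⟩

theorem labelCount_and_eq (P : (V → W) → Prop) (lt : ι → V) (a b : V) :
    labelCount (fun φ => P φ ∧ φ a = φ b) lt =
      labelCount (fun ψ => P (ψ ∘ Quot.mk fun x y : V => x = a ∧ y = b))
        (Quot.mk _ ∘ lt) := by
  rw [labelCount_precomp Quot.mk_surjective, range_comp_quot_mk]
  rfl

theorem labelCount_comp_perm {P : (V → W) → Prop} {σ : Equiv.Perm W}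
    (hP : ∀ φ, P (σ ∘ φ) ↔ P φ) (lt : ι → V) (I : ι → W) :
    labelCount P lt (σ ∘ I) = labelCount P lt I := by
  refine congrArg Nat.cast (Nat.card_congr
    (Equiv.subtypeEquiv ((Equiv.refl V).arrowCongr σ) fun φ => ?_)).symm
  change _ ↔ P (σ ∘ φ) ∧ σ ∘ φ ∘ lt = σ ∘ I
  rw [hP, σ.injective.comp_left.eq_iff]

end labelCount

section graphs

variable {adjH : V → V → Prop} {adjG : W → W → Prop}

theorem isGraphHom_comp_iff (q : V → V') (ψ : V' → W) :
    IsGraphHom adjH adjG (ψ ∘ q) ↔ IsGraphHom (Relation.Map adjH q q) adjG ψ := by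
  constructor
  · rintro h _ _ ⟨u, v, huv, rfl, rfl⟩
    exact h u v huv
  · exact fun h u v huv => h (q u) (q v) ⟨u, v, huv, rfl, rfl⟩

theorem separates_comp_iff (L : List (V × V)) (q : V → V') (ψ : V' → W) :
    Separates L (ψ ∘ q) ↔ Separates (L.map (Prod.map q q)) ψ := by
  rw [Separates, Separates, List.forall_mem_map]
  rfl

theorem relationMap_symm (hH : ∀ u v, adjH u v → adjH v u) (q : V → V') :
    ∀ a b, Relation.Map adjH q q a b → Relation.Map adjH q q b a := by
  rintro _ _ ⟨u, v, huv, rfl, rfl⟩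
  exact ⟨v, u, hH u v huv, rfl, rfl⟩

theorem labelCount_mem_homVectors [Finite V] (hH : ∀ u v, adjH u v → adjH v u) (lt : ι → V) :
    labelCount (IsGraphHom adjH adjG) lt ∈ homVectors adjG := by
  let e := Finite.equivFin V
  refine ⟨_, Relation.Map adjH e e, relationMap_symm hH e, e ∘ lt, ?_⟩
  have hrange : Set.range (fun ψ : Fin (Nat.card V) → W => ψ ∘ e) = Set.univ :=
    Set.range_eq_univ.mpr fun φ => ⟨φ ∘ e.symm, by ext; simp⟩
  have h := labelCount_precomp (W := W) e.surjective (IsGraphHom adjH adjG) lt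
  simp only [isGraphHom_comp_iff, hrange, Set.mem_univ, and_true] at h
  exact h.symm

theorem labelCount_separates_cons [Finite V] [Finite W] (p : V × V) (L : List (V × V))
    (lt : ι → V) :
    labelCount (fun φ => IsGraphHom adjH adjG φ ∧ Separates (p :: L) φ) lt =
      labelCount (fun φ => IsGraphHom adjH adjG φ ∧ Separates L φ) lt -
        labelCount (fun ψ => IsGraphHom (Relation.Map adjH (Quot.mk _) (Quot.mk _)) adjG ψ ∧
            Separates (L.map (Prod.map (Quot.mk _) (Quot.mk _))) ψ)
          (Quot.mk (fun x y : V => x = p.1 ∧ y = p.2) ∘ lt) := by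
  have hcons : ∀ φ : V → W, IsGraphHom adjH adjG φ ∧ Separates (p :: L) φ ↔
      (IsGraphHom adjH adjG φ ∧ Separates L φ) ∧ ¬ φ p.1 = φ p.2 := fun φ => by
    simp only [Separates, List.forall_mem_cons]
    tauto
  simp only [hcons]
  rw [labelCount_and_not, labelCount_and_eq]
  simp only [isGraphHom_comp_iff, separates_comp_iff]

end graphs

section span

variable [Finite W] {adjG : W → W → Prop}

theorem labelCount_separates_mem_span {V : Type u} [Finite V] {adjH : V → V → Prop}
    (hH : ∀ u v, adjH u v → adjH v u) (L : List (V × V)) (lt : ι → V) :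
    labelCount (fun φ => IsGraphHom adjH adjG φ ∧ Separates L φ) lt ∈
      Submodule.span ℝ (homVectors adjG) := by
  induction h : L.length generalizing V with
  | zero =>
    rw [List.length_eq_zero_iff.mp h]
    simp only [Separates, List.not_mem_nil, IsEmpty.forall_iff, implies_true, and_true]
    exact Submodule.subset_span (labelCount_mem_homVectors hH lt)
  | succ k ih =>
    obtain ⟨p, L, rfl⟩ := List.exists_cons_of_length_eq_add_one h
    rw [labelCount_separates_cons]
    apply Submodule.sub_mem _ (ih hH L lt (Nat.succ_injective h))
    exact ih (relationMap_symm hH _) _ _ ((List.length_map _).trans (Nat.succ_injective h))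

theorem labelCount_injective_mem_span {V : Type u} [Finite V] {adjH : V → V → Prop}
    (hH : ∀ u v, adjH u v → adjH v u) (lt : ι → V) :
    labelCount (fun φ => IsGraphHom adjH adjG φ ∧ Injective φ) lt ∈
      Submodule.span ℝ (homVectors adjG) := by
  classical
  have := Fintype.ofFinite V
  have hinj (φ : V → W) : Separates Finset.univ.offDiag.toList φ ↔ Injective φ := by
    simp only [Separates, Finset.mem_toList, Finset.mem_offDiag, Finset.mem_univ, true_and,
      Prod.forall, Injective]
    exact forall₂_congr fun a b => not_imp_not
  simpa only [hinj] using
    labelCount_separates_mem_span (adjG := adjG) hH Finset.univ.offDiag.toList lt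

end span

theorem sum_smul_card_smul_eq_of_invariant {G X : Type*} [Group G] [Finite G] [MulAction G X]
    [Fintype X] (c : X → ℝ) (hc : ∀ (g : G) x, c (g • x) = c x) :
    ∑ x, c x • (fun y => (Nat.card {g : G // g • x = y} : ℝ)) =
      (Nat.card G : ℝ) • c := by
  classical
  have := Fintype.ofFinite G
  funext y
  have hfiber : ∀ g : G, ∑ x, (if g • x = y then c x else 0) = c y := fun g => by
    simp only [← eq_inv_smul_iff, Fintype.sum_ite_eq', hc]
  simp only [Finset.sum_apply, Pi.smul_apply, smul_eq_mul, Nat.card_eq_fintype_card,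
    Fintype.card_subtype, Finset.card_filter, Nat.cast_sum, Nat.cast_ite, Nat.cast_one,
    Nat.cast_zero, Finset.mul_sum, mul_ite, mul_one, mul_zero]
  rw [Finset.sum_comm]
  simp only [hfiber, Finset.sum_const, Finset.card_univ, nsmul_eq_mul]

section automorphisms

variable {adjG : W → W → Prop}

theorem IsGraphHom.adj_iff_of_injective [Finite W] {φ : W → W} (hφ : IsGraphHom adjG adjG φ)
    (hinj : Injective φ) (i j : W) : adjG i j ↔ adjG (φ i) (φ j) := by
  refine ⟨hφ i j, fun h => ?_⟩
  let E : Set (W × W) := {p | adjG p.1 p.2}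
  have hmaps : Set.MapsTo (Prod.map φ φ) E E := fun p hp => hφ _ _ hp
  obtain ⟨p, hp, hpij⟩ := ((E.toFinite.injOn_iff_bijOn_of_mapsTo hmaps).mp
    (hinj.prodMap hinj).injOn).surjOn (show (φ i, φ j) ∈ E from h)
  obtain rfl : p = (i, j) := hinj.prodMap hinj (by simpa using hpij)
  exact hp

theorem card_autGroup_smul_eq [Finite W] (x : ι → W) :
    (fun y => (Nat.card {σ : autGroup adjG // σ • x = y} : ℝ)) =
      labelCount (fun φ => IsGraphHom adjG adjG φ ∧ Injective φ) x := by
  funext y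
  refine congrArg Nat.cast (Nat.card_congr (Equiv.ofBijective (fun σ =>
    ⟨σ.1.1, ⟨fun i j => (σ.1.2 i j).mp, σ.1.1.injective⟩, σ.2⟩) ⟨?_, ?_⟩))
  · exact fun σ τ h => Subtype.ext (Subtype.ext (Equiv.ext (congrFun (congrArg Subtype.val h))))
  · rintro ⟨φ, ⟨hφ, hinj⟩, hx⟩
    have hbij := Finite.injective_iff_bijective.mp hinj
    exact ⟨⟨⟨Equiv.ofBijective φ hbij, hφ.adj_iff_of_injective hinj⟩, hx⟩, rfl⟩

theorem isGraphHom_perm_comp_iff {adjH : V → V → Prop} {σ : Equiv.Perm W}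
    (hσ : σ ∈ autGroup adjG) (φ : V → W) :
    IsGraphHom adjH adjG (σ ∘ φ) ↔ IsGraphHom adjH adjG φ :=
  forall₃_congr fun u v _ => (hσ (φ u) (φ v)).symm

theorem homVectors_subset_autInvariants :
    homVectors adjG ⊆ (autInvariants (ι := ι) adjG : Set ((ι → W) → ℝ)) := by
  rintro _ ⟨m, adjH, -, lt, rfl⟩ σ hσ I
  exact labelCount_comp_perm (isGraphHom_perm_comp_iff hσ) lt I

theorem autInvariants_le_span [Finite ι] [Finite W] (hG : ∀ i j, adjG i j → adjG j i) :
    autInvariants (ι := ι) adjG ≤ Submodule.span ℝ (homVectors adjG) := by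
  intro c hc
  have := Fintype.ofFinite (ι → W)
  have hcard : (Nat.card (autGroup adjG) : ℝ) ≠ 0 := Nat.cast_ne_zero.mpr Nat.card_pos.ne'
  rw [← inv_smul_smul₀ hcard c, ← sum_smul_card_smul_eq_of_invariant c fun σ => hc σ.1 σ.2]
  refine Submodule.smul_mem _ _ (Submodule.sum_mem _ fun x _ => Submodule.smul_mem _ _ ?_)
  rw [card_autGroup_smul_eq]
  exact labelCount_injective_mem_span hG x

theorem span_homVectors_eq_autInvariants [Finite ι] [Finite W]
    (hG : ∀ i j, adjG i j → adjG j i) :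
    Submodule.span ℝ (homVectors adjG) = autInvariants (ι := ι) adjG :=
  le_antisymm (Submodule.span_le.mpr homVectors_subset_autInvariants) (autInvariants_le_span hG)

end automorphisms

/-- A vector `c` indexed by `Fin l → Fin n` is fixed by the
permutation action of `Aut(G)` if and only if it lies in the ℝ-linear span of
the `G`-homomorphism matrices (regarded as vectors) of `(0,l)`-bilabelled
graphs `(H, ∅, lt)` with `H` a graph on `Fin m` for some `m`. -/
theorem invariant_iff_mem_span_homVectors
    (n l : ℕ) (adjG : Fin n → Fin n → Prop)
    (hG : ∀ i j, adjG i j → adjG j i)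
    (c : (Fin l → Fin n) → ℝ) :
    (∀ σ : Equiv.Perm (Fin n), (∀ i j, adjG i j ↔ adjG (σ i) (σ j)) →
      ∀ I : Fin l → Fin n, c (⇑σ ∘ I) = c I) ↔
    c ∈ Submodule.span ℝ
      {v : (Fin l → Fin n) → ℝ |
        ∃ (m : ℕ) (adjH : Fin m → Fin m → Prop),
          (∀ u v, adjH u v → adjH v u) ∧
          ∃ lt : Fin l → Fin m,
            v = fun I => (Nat.card {φ : Fin m → Fin n //
              (∀ u v, adjH u v → adjG (φ u) (φ v)) ∧ φ ∘ lt = I} : ℝ)} := by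
  change c ∈ autInvariants adjG ↔ c ∈ Submodule.span ℝ (homVectors adjG)
  rw [span_homVectors_eq_autInvariants hG]
end

section
/- Let G be a graph on n vertices, let k, l ≥ 0, and let d_k, d_l ≥ 1 be feature dimensions. A real matrix M with rows indexed by pairs (I, i) with I : Fin l → Fin n and i ∈ Fin d_l, and columns indexed by pairs (J, j) with J : Fin k → Fin n and j ∈ Fin d_k, satisfies M (σ ∘ I, i) (σ ∘ J, j) = M (I, i) (J, j) for all σ ∈ Aut(G) and all I, i, J, j if and only if M lies in the ℝ-linear span of the matrices X_{𝐇,i,j}^G, where 𝐇 ranges over all (k,l)-bilabelled graphs, i ∈ Fin d_l, j ∈ Fin d_k, and X_{𝐇,i,j}^G has ((I, i'), (J, j'))-entry equal to (X_𝐇^G) I J if i' = i and j' = j, and 0 otherwise. -/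
/-- The `G`-homomorphism matrix of a `(k,l)`-bilabelled graph `(H, kt, lt)`:
the `(I,J)`-entry counts graph homomorphisms `φ : V(H) → Fin n` from `H` to `G`
with `φ ∘ lt = I` and `φ ∘ kt = J`. -/
noncomputable def homMatrix (n : ℕ) (adjG : Fin n → Fin n → Prop)
    {V : Type} [Fintype V] (adjH : V → V → Prop)
    {k l : ℕ} (kt : Fin k → V) (lt : Fin l → V) :
    Matrix (Fin l → Fin n) (Fin k → Fin n) ℝ :=
  Matrix.of fun I J =>
    (Nat.card {φ : V → Fin n //
      (∀ u v, adjH u v → adjG (φ u) (φ v)) ∧ φ ∘ lt = I ∧ φ ∘ kt = J} : ℝ)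

/-!
Homomorphism matrices are invariant because an automorphism `σ` of `G` acts on the
homomorphisms `H → G` by `φ ↦ σ ∘ φ`. Conversely, averaging an invariant feature block over
`Aut(G)` writes it as a combination of the matrices counting the automorphisms that send a fixed
pair `(I₀, J₀)` to `(I, J)`. For a finite graph the automorphisms are exactly the endomorphisms
that separate every pair of distinct vertices, and deletion–contraction on the separation
constraints (the homomorphisms separating `a` and `b` are all homomorphisms minus those of the
graph in which `b` is merged into `a`) turns such counts into integer combinations of plain
homomorphism counts.
-/

open Equiv Finset

lemma Nat.card_subtype_eq_sum_ite {α : Type*} [Fintype α] (p : α → Prop) [DecidablePred p] :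
    (Nat.card {x // p x} : ℝ) = ∑ x, if p x then 1 else 0 := by
  simp [Nat.card_eq_fintype_card, Fintype.card_subtype]

lemma Nat.card_subtype_eq_card_and_add_card_and_not {α : Type*} [Finite α] (p q : α → Prop) :
    Nat.card {x // p x} = Nat.card {x // p x ∧ q x} + Nat.card {x // p x ∧ ¬ q x} := by
  classical
  rw [← Nat.card_sum]
  exact Nat.card_congr ((Equiv.sumCongr
    (Equiv.subtypeSubtypeEquivSubtypeInter p q).symm
    (Equiv.subtypeSubtypeEquivSubtypeInter p (fun x => ¬ q x)).symm).trans
    (Equiv.sumCompl _)).symm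

lemma Relation.map_imp_iff {V W X : Type*} (r : V → V → Prop) (s : X → X → Prop) (m : V → W)
    (ψ : W → X) :
    (∀ u v, Relation.Map r m m u v → s (ψ u) (ψ v)) ↔ ∀ u v, r u v → s (ψ (m u)) (ψ (m v)) :=
  ⟨fun h u v huv => h _ _ ⟨u, v, huv, rfl, rfl⟩,
    by rintro h _ _ ⟨u, v, huv, rfl, rfl⟩; exact h u v huv⟩

def IsAut {V : Type*} (r : V → V → Prop) (σ : Perm V) : Prop :=
  ∀ i j, r i j ↔ r (σ i) (σ j)

lemma rel_of_injective_of_forall_rel_imp {V : Type*} [Finite V] {r : V → V → Prop} {φ : V → V}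
    (hφ : Function.Injective φ) (hom : ∀ u v, r u v → r (φ u) (φ v)) {a b : V}
    (h : r (φ a) (φ b)) : r a b := by
  -- `Prod.map φ φ` injects the finite set of edges into itself, hence is onto it.
  have hmaps : Set.MapsTo (Prod.map φ φ) {p | r p.1 p.2} {p | r p.1 p.2} := fun p hp => hom _ _ hp
  obtain ⟨p, hp, hpab⟩ := (((Set.toFinite _).injOn_iff_bijOn_of_mapsTo hmaps).1
    (hφ.prodMap hφ).injOn).surjOn (show (φ a, φ b) ∈ _ from h)
  rwa [hφ.prodMap hφ (hpab.trans (Prod.map_apply φ φ a b).symm)] at hp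

lemma isAut_iff_forall_rel_imp {V : Type*} [Finite V] {r : V → V → Prop} {σ : Perm V} :
    IsAut r σ ↔ ∀ u v, r u v → r (σ u) (σ v) :=
  ⟨fun h u v => (h u v).1, fun h u v => ⟨h u v, rel_of_injective_of_forall_rel_imp σ.injective h⟩⟩

section Transporter

variable {V ι κ : Type*} [Fintype V] [DecidableEq V] [Fintype ι] [DecidableEq ι] [Fintype κ]
  [DecidableEq κ]

noncomputable def transporterMatrix (S : Perm V → Prop) (I₀ : ι → V) (J₀ : κ → V) :
    Matrix (ι → V) (κ → V) ℝ :=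
  Matrix.of fun I J => (Nat.card {σ : Perm V // S σ ∧ ⇑σ ∘ I₀ = I ∧ ⇑σ ∘ J₀ = J} : ℝ)

theorem sum_smul_transporterMatrix (S : Perm V → Prop) (N : Matrix (ι → V) (κ → V) ℝ)
    (hN : ∀ σ, S σ → ∀ I J, N (⇑σ ∘ I) (⇑σ ∘ J) = N I J) :
    ∑ I₀, ∑ J₀, N I₀ J₀ • transporterMatrix S I₀ J₀ = (Nat.card {σ // S σ} : ℝ) • N := by
  classical
  ext I J
  have hinv : ∀ σ : Perm V, S σ → N (⇑σ.symm ∘ I) (⇑σ.symm ∘ J) = N I J := fun σ hσ => by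
    simpa [← Function.comp_assoc] using (hN σ hσ (⇑σ.symm ∘ I) (⇑σ.symm ∘ J)).symm
  simp only [Matrix.sum_apply, Matrix.smul_apply, smul_eq_mul, transporterMatrix, Matrix.of_apply,
    ← Equiv.eq_symm_comp, Nat.card_subtype_eq_sum_ite, ite_and, Finset.mul_sum, Finset.sum_mul]
  -- move the sum over `σ` to the outside
  rw [Finset.sum_comm]
  refine (Finset.sum_congr rfl fun J₀ _ => Finset.sum_comm).trans ?_
  rw [Finset.sum_comm]
  refine Finset.sum_congr rfl fun σ _ => ?_
  split_ifs with hσ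
  · simp [hinv σ hσ]
  · simp

end Transporter

section Merge

variable {V : Type*} [DecidableEq V] {a b : V}

def mergeVertex (hab : a ≠ b) (x : V) : {x : V // x ≠ b} :=
  if h : x = b then ⟨a, hab⟩ else ⟨x, h⟩

lemma mergeVertex_left_eq_right (hab : a ≠ b) : mergeVertex hab a = mergeVertex hab b := by
  simp [mergeVertex, hab]

lemma mergeVertex_comp_val (hab : a ≠ b) : mergeVertex hab ∘ Subtype.val = id := by
  funext x
  simp [mergeVertex, x.2]

lemma comp_mergeVertex {X : Type*} (hab : a ≠ b) {φ : V → X} (hφ : φ a = φ b) :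
    (φ ∘ Subtype.val) ∘ mergeVertex hab = φ := by
  funext x
  by_cases hx : x = b <;> simp [mergeVertex, hx, hφ]

lemma card_eq_card_comp_mergeVertex {X : Type*} (hab : a ≠ b) (P : (V → X) → Prop) :
    Nat.card {φ : V → X // P φ ∧ φ a = φ b} =
      Nat.card {ψ : {x // x ≠ b} → X // P (ψ ∘ mergeVertex hab)} :=
  Nat.card_congr
    { toFun := fun φ => ⟨φ.1 ∘ Subtype.val, by rw [comp_mergeVertex hab φ.2.2]; exact φ.2.1⟩
      invFun := fun ψ => ⟨ψ.1 ∘ mergeVertex hab, ψ.2, by simp [mergeVertex_left_eq_right hab]⟩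
      left_inv := fun φ => Subtype.ext (comp_mergeVertex hab φ.2.2)
      right_inv := fun ψ => Subtype.ext (by
        simp only [Function.comp_assoc, mergeVertex_comp_val, Function.comp_id]) }

end Merge

section Separating

variable {n : ℕ} (adjG : Fin n → Fin n → Prop)

noncomputable def homSpan (k l : ℕ) : Submodule ℝ (Matrix (Fin l → Fin n) (Fin k → Fin n) ℝ) :=
  Submodule.span ℝ {N | ∃ (m : ℕ) (adjH : Fin m → Fin m → Prop), Std.Symm adjH ∧
    ∃ (kt : Fin k → Fin m) (lt : Fin l → Fin m), N = homMatrix n adjG adjH kt lt}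

variable {k l : ℕ} {V : Type}

noncomputable def separatingHomMatrix (adjH : V → V → Prop) (L : List (V × V))
    (kt : Fin k → V) (lt : Fin l → V) : Matrix (Fin l → Fin n) (Fin k → Fin n) ℝ :=
  Matrix.of fun I J =>
    (Nat.card {φ : V → Fin n // (∀ u v, adjH u v → adjG (φ u) (φ v)) ∧
      (∀ p ∈ L, φ p.1 ≠ φ p.2) ∧ φ ∘ lt = I ∧ φ ∘ kt = J} : ℝ)

lemma separatingHomMatrix_nil [Fintype V] (adjH : V → V → Prop) (kt : Fin k → V) (lt : Fin l → V) :
    separatingHomMatrix adjG adjH [] kt lt = homMatrix n adjG adjH kt lt := by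
  simp [separatingHomMatrix, homMatrix]

lemma homMatrix_eq_of_equiv [Fintype V] {W : Type} [Fintype W] (e : V ≃ W) (adjH : V → V → Prop)
    (kt : Fin k → V) (lt : Fin l → V) :
    homMatrix n adjG adjH kt lt =
      homMatrix n adjG (fun u v => adjH (e.symm u) (e.symm v)) (e ∘ kt) (e ∘ lt) := by
  ext I J
  simp only [homMatrix, Matrix.of_apply]
  congr 1
  refine Nat.card_congr (Equiv.subtypeEquiv (e.arrowCongr (Equiv.refl _)) fun φ => ?_)
  simp [Function.comp_def, e.forall_congr_left]

lemma homMatrix_mem_homSpan [Fintype V] (adjH : V → V → Prop) [Std.Symm adjH]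
    (kt : Fin k → V) (lt : Fin l → V) : homMatrix n adjG adjH kt lt ∈ homSpan adjG k l :=
  Submodule.subset_span ⟨_, _, ⟨fun _ _ h => symm h⟩, _, _,
    homMatrix_eq_of_equiv adjG (Fintype.equivFin V) adjH kt lt⟩

lemma separatingHomMatrix_cons [Finite V] [DecidableEq V] (adjH : V → V → Prop) {a b : V}
    (hab : a ≠ b) (L : List (V × V)) (kt : Fin k → V) (lt : Fin l → V) :
    separatingHomMatrix adjG adjH ((a, b) :: L) kt lt =
      separatingHomMatrix adjG adjH L kt lt -
        separatingHomMatrix adjG (Relation.Map adjH (mergeVertex hab) (mergeVertex hab))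
          (L.map (Prod.map (mergeVertex hab) (mergeVertex hab)))
          (mergeVertex hab ∘ kt) (mergeVertex hab ∘ lt) := by
  ext I J
  simp only [separatingHomMatrix, Matrix.of_apply, Matrix.sub_apply, eq_sub_iff_add_eq]
  norm_cast
  conv_rhs => rw [Nat.card_subtype_eq_card_and_add_card_and_not _ fun φ : V → Fin n => φ a = φ b,
    card_eq_card_comp_mergeVertex hab, add_comm]
  congr 1
  · refine Nat.card_congr (Equiv.subtypeEquivRight fun φ => ?_)
    simp only [List.forall_mem_cons]
    tauto
  · refine Nat.card_congr (Equiv.subtypeEquivRight fun ψ => ?_)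
    simp only [Relation.map_imp_iff, List.forall_mem_map, Prod.map_fst, Prod.map_snd]
    rfl

lemma separatingHomMatrix_cons_self (adjH : V → V → Prop) (a : V) (L : List (V × V))
    (kt : Fin k → V) (lt : Fin l → V) : separatingHomMatrix adjG adjH ((a, a) :: L) kt lt = 0 := by
  ext I J
  simp [separatingHomMatrix]

theorem separatingHomMatrix_mem_homSpan [Fintype V] (adjH : V → V → Prop) [Std.Symm adjH]
    (L : List (V × V)) (kt : Fin k → V) (lt : Fin l → V) :
    separatingHomMatrix adjG adjH L kt lt ∈ homSpan adjG k l := by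
  classical
  induction hcard : Nat.card V using Nat.strong_induction_on generalizing V with
  | _ N ih =>
  induction L with
  | nil => simpa only [separatingHomMatrix_nil] using homMatrix_mem_homSpan adjG adjH kt lt
  | cons p L ihL =>
    obtain ⟨a, b⟩ := p
    by_cases hab : a = b
    · simp only [hab, separatingHomMatrix_cons_self, zero_mem]
    · rw [separatingHomMatrix_cons adjG adjH hab]
      exact sub_mem ihL (ih _ (hcard ▸ Finite.card_subtype_lt (not_not.2 rfl)) _ _ _ _ rfl)

end Separating

section Automorphisms

variable {n : ℕ} (adjG : Fin n → Fin n → Prop) {k l : ℕ}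

lemma transporterMatrix_isAut_eq_separatingHomMatrix (I₀ : Fin l → Fin n) (J₀ : Fin k → Fin n) :
    transporterMatrix (IsAut adjG) I₀ J₀ = separatingHomMatrix adjG adjG
      (univ.filter fun p : Fin n × Fin n => p.1 ≠ p.2).toList J₀ I₀ := by
  ext I J
  simp only [transporterMatrix, separatingHomMatrix, Matrix.of_apply, Finset.mem_toList,
    Finset.mem_filter, Finset.mem_univ, true_and, Prod.forall, isAut_iff_forall_rel_imp]
  congr 1
  refine Nat.card_congr
    { toFun := fun σ => ⟨σ.1, σ.2.1, fun u v huv => σ.1.injective.ne huv, σ.2.2⟩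
      invFun := fun φ => ⟨Equiv.ofBijective φ.1 (Finite.injective_iff_bijective.1
          fun u v => not_imp_not.1 (φ.2.2.1 u v)), φ.2.1, φ.2.2.2⟩
      left_inv := fun σ => Subtype.ext (Equiv.ext fun _ => rfl)
      right_inv := fun φ => rfl }

theorem transporterMatrix_isAut_mem_homSpan [Std.Symm adjG] (I₀ : Fin l → Fin n)
    (J₀ : Fin k → Fin n) : transporterMatrix (IsAut adjG) I₀ J₀ ∈ homSpan adjG k l := by
  rw [transporterMatrix_isAut_eq_separatingHomMatrix]
  exact separatingHomMatrix_mem_homSpan adjG adjG _ _ _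

theorem mem_homSpan_of_isAut_invariant [Std.Symm adjG]
    (N : Matrix (Fin l → Fin n) (Fin k → Fin n) ℝ)
    (hN : ∀ σ, IsAut adjG σ → ∀ I J, N (⇑σ ∘ I) (⇑σ ∘ J) = N I J) : N ∈ homSpan adjG k l := by
  have : Nonempty {σ // IsAut adjG σ} := ⟨⟨1, fun _ _ => Iff.rfl⟩⟩
  have hcard : (Nat.card {σ // IsAut adjG σ} : ℝ) ≠ 0 := Nat.cast_ne_zero.2 Nat.card_pos.ne'
  rw [← inv_smul_smul₀ hcard N, ← sum_smul_transporterMatrix _ N hN]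
  exact Submodule.smul_mem _ _ (Submodule.sum_mem _ fun I₀ _ => Submodule.sum_mem _ fun J₀ _ =>
    Submodule.smul_mem _ _ (transporterMatrix_isAut_mem_homSpan adjG I₀ J₀))

lemma homMatrix_comp_of_isAut {V : Type} [Fintype V] (adjH : V → V → Prop) (kt : Fin k → V)
    (lt : Fin l → V) {σ : Perm (Fin n)} (hσ : IsAut adjG σ) (I : Fin l → Fin n)
    (J : Fin k → Fin n) :
    homMatrix n adjG adjH kt lt (⇑σ ∘ I) (⇑σ ∘ J) = homMatrix n adjG adjH kt lt I J := by
  simp only [homMatrix, Matrix.of_apply]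
  congr 1
  refine (Nat.card_congr (Equiv.subtypeEquiv ((Equiv.refl V).arrowCongr σ) fun φ => ?_)).symm
  change _ ↔ (∀ u v, adjH u v → adjG (σ (φ u)) (σ (φ v))) ∧
    ⇑σ ∘ φ ∘ lt = ⇑σ ∘ I ∧ ⇑σ ∘ φ ∘ kt = ⇑σ ∘ J
  simp only [← hσ _ _, σ.injective.comp_left.eq_iff]

end Automorphisms

section FeatureBlock

variable {R ι κ A B : Type*} [Semiring R] [DecidableEq A] [DecidableEq B]

def featureBlock (a : A) (b : B) : Matrix ι κ R →ₗ[R] Matrix (ι × A) (κ × B) R where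
  toFun N := Matrix.of fun p q => if p.2 = a ∧ q.2 = b then N p.1 q.1 else 0
  map_add' N N' := by
    ext
    simp only [Matrix.of_apply, Matrix.add_apply]
    split_ifs <;> simp
  map_smul' c N := by
    ext
    simp only [Matrix.of_apply, Matrix.smul_apply, RingHom.id_apply, smul_ite, smul_zero]

lemma sum_featureBlock [Fintype A] [Fintype B] (M : Matrix (ι × A) (κ × B) R) :
    ∑ a, ∑ b, featureBlock a b (Matrix.of fun I J => M (I, a) (J, b)) = M := by
  ext ⟨I, a⟩ ⟨J, b⟩
  simp [featureBlock, Matrix.sum_apply, ite_and]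

end FeatureBlock

theorem equivariant_with_features_iff_mem_span_general
    (n k l dk dl : ℕ)
    (adjG : Fin n → Fin n → Prop)
    (hG : ∀ i j, adjG i j → adjG j i)
    (M : Matrix ((Fin l → Fin n) × Fin dl) ((Fin k → Fin n) × Fin dk) ℝ) :
    (∀ σ : Equiv.Perm (Fin n), (∀ i j, adjG i j ↔ adjG (σ i) (σ j)) →
      ∀ (I : Fin l → Fin n) (i : Fin dl) (J : Fin k → Fin n) (j : Fin dk),
        M (⇑σ ∘ I, i) (⇑σ ∘ J, j) = M (I, i) (J, j)) ↔
    M ∈ Submodule.span ℝ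
      {X : Matrix ((Fin l → Fin n) × Fin dl) ((Fin k → Fin n) × Fin dk) ℝ |
        ∃ (m : ℕ) (adjH : Fin m → Fin m → Prop),
          (∀ u v, adjH u v → adjH v u) ∧
          ∃ (kt : Fin k → Fin m) (lt : Fin l → Fin m) (i : Fin dl) (j : Fin dk),
            X = Matrix.of fun p q =>
              if p.2 = i ∧ q.2 = j then homMatrix n adjG adjH kt lt p.1 q.1
              else 0} := by
  have : Std.Symm adjG := ⟨hG⟩
  constructor
  · intro hM
    rw [← sum_featureBlock M]
    refine Submodule.sum_mem _ fun i _ => Submodule.sum_mem _ fun j _ => ?_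
    have hN := Submodule.mem_map_of_mem (f := featureBlock i j)
      (mem_homSpan_of_isAut_invariant adjG (Matrix.of fun I J => M (I, i) (J, j))
        fun σ hσ I J => hM σ hσ I i J j)
    rw [homSpan, Submodule.map_span] at hN
    refine Submodule.span_mono ?_ hN
    rintro _ ⟨_, ⟨m, adjH, hH, kt, lt, rfl⟩, rfl⟩
    exact ⟨m, adjH, hH.symm, kt, lt, i, j, rfl⟩
  · intro hM σ hσ I i J j
    induction hM using Submodule.span_induction with
    | mem X hX =>
      obtain ⟨m, adjH, -, kt, lt, i₀, j₀, rfl⟩ := hX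
      simp only [Matrix.of_apply, homMatrix_comp_of_isAut adjG adjH kt lt hσ]
    | zero => rfl
    | add X Y _ _ hX hY => simp only [Matrix.add_apply, hX, hY]
    | smul c X _ hX => simp only [Matrix.smul_apply, hX]

/-- With feature dimensions `d_k, d_l ≥ 1`, a matrix `M` with
rows indexed by pairs `(I, i)` (`I : Fin l → Fin n`, `i : Fin d_l`) and columns
indexed by pairs `(J, j)` is `Aut(G)`-equivariant (acting on tuple indices and
trivially on feature indices) if and only if it lies in the ℝ-linear span of
the matrices `X_{𝐇,i,j}` obtained by placing the `G`-homomorphism matrix of a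
`(k,l)`-bilabelled graph `𝐇` in the feature block `(i, j)` and `0` elsewhere. -/
theorem equivariant_with_features_iff_mem_span
    (n k l dk dl : ℕ) (hdk : 1 ≤ dk) (hdl : 1 ≤ dl)
    (adjG : Fin n → Fin n → Prop)
    (hG : ∀ i j, adjG i j → adjG j i)
    (M : Matrix ((Fin l → Fin n) × Fin dl) ((Fin k → Fin n) × Fin dk) ℝ) :
    (∀ σ : Equiv.Perm (Fin n), (∀ i j, adjG i j ↔ adjG (σ i) (σ j)) →
      ∀ (I : Fin l → Fin n) (i : Fin dl) (J : Fin k → Fin n) (j : Fin dk),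
        M (⇑σ ∘ I, i) (⇑σ ∘ J, j) = M (I, i) (J, j)) ↔
    M ∈ Submodule.span ℝ
      {X : Matrix ((Fin l → Fin n) × Fin dl) ((Fin k → Fin n) × Fin dk) ℝ |
        ∃ (m : ℕ) (adjH : Fin m → Fin m → Prop),
          (∀ u v, adjH u v → adjH v u) ∧
          ∃ (kt : Fin k → Fin m) (lt : Fin l → Fin m) (i : Fin dl) (j : Fin dk),
            X = Matrix.of fun p q =>
              if p.2 = i ∧ q.2 = j then homMatrix n adjG adjH kt lt p.1 q.1
              else 0} :=
  equivariant_with_features_iff_mem_span_general n k l dk dl adjG hG M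
end
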